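/- In the Siegel upper half-space over a real closed field F, with Lagrangians labeled 0, Z, X, l_∞ (Z, X symmetric matrices, l_∞ the span of the first n standard basis vectors and 0 the span of the last n), assuming pairwise transversality, the crossratio R(0, Z, X, l_∞) equals Z^{-1}X. -/

import Mathlib

open Matrix

/-- The linear embedding `F^n → F^(2n)` whose image is the column span of the block
matrix `(M; Id)` (the Lagrangian parametrized by the symmetric matrix `M`). -/
def colMap {F : Type*} [CommRing F] {n : ℕ} (M : Matrix (Fin n) (Fin n) F) :
    (Fin n → F) →ₗ[F] ((Fin n ⊕ Fin n) → F) where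
  toFun v := Sum.elim (M.mulVec v) v
  map_add' u v := by
    funext x
    cases x <;> simp [Matrix.mulVec_add]
  map_smul' c v := by
    funext x
    cases x <;> simp [Matrix.mulVec_smul]

/-- The linear embedding `F^n → F^(2n)` whose image is the Lagrangian `l_∞`, the span of
the first `n` standard basis vectors. -/
def inftyMap (F : Type*) [CommRing F] (n : ℕ) :
    (Fin n → F) →ₗ[F] ((Fin n ⊕ Fin n) → F) where
  toFun v := Sum.elim v 0
  map_add' u v := by
    funext x
    cases x <;> simp
  map_smul' c v := by
    funext x
    cases x <;> simp

/-!
In the coordinates `(M w, w)` of `colMap M`, the vector `(0, v)` of `0` splits along `l_∞ ⊕ X` as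
`(-Xv, 0) + (Xv, v)`, so `p_{l_∞}^{∥X}` sends it to `(-Xv, 0)`. Writing `Xv = Zw`, this splits
along `0 ⊕ Z` as `(0, w) + (-Zw, -w)`, so `p_0^{∥Z}` sends it to `(0, w)` with `w = Z⁻¹Xv`.
-/

theorem LinearMap.IsProj.apply_add_of_mem_ker {S M : Type*} [Semiring S] [AddCommMonoid M]
    [Module S M] {m : Submodule S M} {f : M →ₗ[S] M} (hf : LinearMap.IsProj m f) {u k : M}
    (hu : u ∈ m) (hk : k ∈ LinearMap.ker f) : f (u + k) = u := by
  rw [map_add, hf.map_id u hu, LinearMap.mem_ker.mp hk, add_zero]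

section Chart

variable {F : Type*} [CommRing F] {n : ℕ}

theorem colMap_zero_eq_inftyMap_add_colMap (X : Matrix (Fin n) (Fin n) F) (v : Fin n → F) :
    colMap 0 v = inftyMap F n (-(X *ᵥ v)) + colMap X v := by
  funext x
  cases x <;> simp [colMap, inftyMap]

theorem inftyMap_neg_mulVec_eq_colMap_zero_add_colMap (Z : Matrix (Fin n) (Fin n) F)
    (w : Fin n → F) : inftyMap F n (-(Z *ᵥ w)) = colMap 0 w + colMap Z (-w) := by
  funext x
  cases x <;> simp [colMap, inftyMap, Matrix.mulVec_neg]

end Chart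

theorem crossratio_chart_formula_general (F : Type*) [Field F] (n : ℕ)
    (Z X : Matrix (Fin n) (Fin n) F)
    (hZ : IsUnit Z.det)
    (p q : ((Fin n ⊕ Fin n) → F) →ₗ[F] ((Fin n ⊕ Fin n) → F))
    (hp : LinearMap.IsProj (LinearMap.range (colMap (0 : Matrix (Fin n) (Fin n) F))) p)
    (hpker : LinearMap.ker p = LinearMap.range (colMap Z))
    (hq : LinearMap.IsProj (LinearMap.range (inftyMap F n)) q)
    (hqker : LinearMap.ker q = LinearMap.range (colMap X)) :
    ∀ v : Fin n → F,
      p (q (colMap (0 : Matrix (Fin n) (Fin n) F) v)) =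
        colMap (0 : Matrix (Fin n) (Fin n) F) ((Z⁻¹ * X).mulVec v) := by
  intro v
  set w := (Z⁻¹ * X) *ᵥ v
  have hZw : Z *ᵥ w = X *ᵥ v := by
    rw [Matrix.mulVec_mulVec, ← Matrix.mul_assoc, Matrix.mul_nonsing_inv Z hZ, Matrix.one_mul]
  have hq_v : q (colMap 0 v) = inftyMap F n (-(X *ᵥ v)) := by
    rw [colMap_zero_eq_inftyMap_add_colMap X v]
    exact hq.apply_add_of_mem_ker ⟨_, rfl⟩ (hqker ▸ ⟨v, rfl⟩)
  rw [hq_v, ← hZw, inftyMap_neg_mulVec_eq_colMap_zero_add_colMap Z w]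
  exact hp.apply_add_of_mem_ker ⟨w, rfl⟩ (hpker ▸ ⟨-w, rfl⟩)

/-- In the chart of the Siegel space with Lagrangians labeled
`0, Z, X, l_∞` (`Z`, `X` symmetric), assuming pairwise transversality, the crossratio
`R(0, Z, X, l_∞) = p_0^{∥Z} ∘ p_{l_∞}^{∥X}|_0` equals `Z⁻¹ * X` in the coordinates of the
Lagrangian `0`. -/
theorem crossratio_chart_formula (F : Type*) [Field F] [LinearOrder F] [IsStrictOrderedRing F] (n : ℕ)
    (Z X : Matrix (Fin n) (Fin n) F) (hZs : Zᵀ = Z) (hXs : Xᵀ = X)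
    (hZ : IsUnit Z.det) (hX : IsUnit X.det) (hZX : IsUnit (Z - X).det)
    (p q : ((Fin n ⊕ Fin n) → F) →ₗ[F] ((Fin n ⊕ Fin n) → F))
    (hp : LinearMap.IsProj (LinearMap.range (colMap (0 : Matrix (Fin n) (Fin n) F))) p)
    (hpker : LinearMap.ker p = LinearMap.range (colMap Z))
    (hq : LinearMap.IsProj (LinearMap.range (inftyMap F n)) q)
    (hqker : LinearMap.ker q = LinearMap.range (colMap X)) :
    ∀ v : Fin n → F,
      p (q (colMap (0 : Matrix (Fin n) (Fin n) F) v)) =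
        colMap (0 : Matrix (Fin n) (Fin n) F) ((Z⁻¹ * X).mulVec v) :=
  crossratio_chart_formula_general F n Z X hZ p q hp hpker hq hqker
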